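/- For positive trace class operators with integral kernels σ(x,y) and δ(x,y) on L²(ℝ³) and any bounded measurable even V, |∫∫ V(x-y)[|(σ+δ)(x,y)|² - |σ(x,y)|²] dx dy| ≤ 2 ∫∫ |V(x-y)| (σ+δ)(x,x) δ(y,y) dx dy. -/

import Mathlib

/-!
Expanding a positive kernel spectrally, `k(x,y) = ∑ λₙ φₙ(x) conj φₙ(y)`, Cauchy–Schwarz in `n`
gives `|k(x,y)| ≤ √k(x,x) √k(y,y)`. Since `||s + d|² - |s|²| ≤ |d| (2|s| + |d|)`, these bounds
and AM–GM dominate the integrand by `|V(x-y)| ((σ+δ)(x,x) δ(y,y) + (σ+δ)(y,y) δ(x,x))`, and as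
`V` is even the two terms have the same integral.
-/

open MeasureTheory Complex

noncomputable section

abbrev R3 := EuclideanSpace ℝ (Fin 3)

/-- A function `k : ℝ³ × ℝ³ → ℂ` is the integral kernel of a positive trace class
operator on `L²(ℝ³)` if it admits a spectral decomposition
`k(x,y) = ∑ₙ λₙ φₙ(x) conj(φₙ(y))` with `λₙ ≥ 0`, `∑ λₙ < ∞` and normalized `φₙ ∈ L²`,
and its diagonal is integrable. -/
def IsPosTCKernel (k : R3 → R3 → ℂ) : Prop :=
  ∃ (lam : ℕ → ℝ) (φ : ℕ → R3 → ℂ),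
    (∀ n, 0 ≤ lam n) ∧ Summable lam ∧
    (∀ n, ∫ x : R3, ‖φ n x‖ ^ 2 = 1) ∧
    (∀ x y : R3, HasSum (fun n => (lam n : ℂ) * φ n x * (starRingEnd ℂ) (φ n y)) (k x y)) ∧
    Integrable (fun x : R3 => (k x x).re)

theorem HasSum.norm_le_of_forall_sum_norm_le {ι E : Type*} [SeminormedAddCommGroup E]
    {f : ι → E} {a : E} (hf : HasSum f a) {c : ℝ} (h : ∀ s : Finset ι, ∑ i ∈ s, ‖f i‖ ≤ c) :
    ‖a‖ ≤ c :=
  le_of_tendsto' hf.norm fun s => (norm_sum_le s f).trans (h s)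

theorem abs_norm_add_sq_sub_norm_sq_le {E : Type*} [SeminormedAddCommGroup E] {s d : E}
    {a a' b b' : ℝ} (ha : 0 ≤ a) (ha' : 0 ≤ a') (hb : 0 ≤ b) (hb' : 0 ≤ b')
    (hs : ‖s‖ ≤ √a * √a') (hd : ‖d‖ ≤ √b * √b') :
    |‖s + d‖ ^ 2 - ‖s‖ ^ 2| ≤ (a + b) * b' + (a' + b') * b := by
  have hdiff : |‖s + d‖ - ‖s‖| ≤ ‖d‖ := by
    simpa using abs_norm_sub_norm_le (s + d) s
  have hsum : ‖s + d‖ + ‖s‖ ≤ 2 * ‖s‖ + ‖d‖ := by linarith [norm_add_le s d]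
  have hsq : ‖s + d‖ ^ 2 - ‖s‖ ^ 2 = (‖s + d‖ - ‖s‖) * (‖s + d‖ + ‖s‖) := by ring
  have amgm : 2 * (√a * √a') * (√b * √b') ≤ a * b' + a' * b := by
    nlinarith [sq_nonneg (√a * √b' - √a' * √b), Real.sq_sqrt ha, Real.sq_sqrt ha',
      Real.sq_sqrt hb, Real.sq_sqrt hb']
  have hdd : ‖d‖ * ‖d‖ ≤ b * b' := by
    calc ‖d‖ * ‖d‖ ≤ (√b * √b') * (√b * √b') := mul_self_le_mul_self (norm_nonneg d) hd
      _ = b * b' := by rw [mul_mul_mul_comm, Real.mul_self_sqrt hb, Real.mul_self_sqrt hb']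
  calc |‖s + d‖ ^ 2 - ‖s‖ ^ 2| = |‖s + d‖ - ‖s‖| * (‖s + d‖ + ‖s‖) := by
        rw [hsq, abs_mul, abs_of_nonneg (by positivity : 0 ≤ ‖s + d‖ + ‖s‖)]
    _ ≤ ‖d‖ * (2 * ‖s‖ + ‖d‖) := by gcongr
    _ ≤ 2 * (√a * √a') * (√b * √b') + b * b' := by
        nlinarith [mul_le_mul_of_nonneg_left hs (norm_nonneg d),
          mul_le_mul_of_nonneg_left hd (by positivity : 0 ≤ √a * √a')]
    _ ≤ (a + b) * b' + (a' + b') * b := by nlinarith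

theorem abs_integral_le_two_mul_integral_of_abs_le_add_swap {α : Type*} [MeasurableSpace α]
    {μ : Measure α} [SFinite μ] {f g : α × α → ℝ} (hg : Integrable g (μ.prod μ))
    (hfg : ∀ p, |f p| ≤ g p + g p.swap) :
    |∫ p, f p ∂μ.prod μ| ≤ 2 * ∫ p, g p ∂μ.prod μ := by
  have hg_swap : Integrable (fun p => g p.swap) (μ.prod μ) := hg.swap
  calc |∫ p, f p ∂μ.prod μ| ≤ ∫ p, (g p + g p.swap) ∂μ.prod μ :=
        norm_integral_le_of_norm_le (f := f) (g := fun p => g p + g p.swap) (hg.add hg_swap)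
          (.of_forall hfg)
    _ = 2 * ∫ p, g p ∂μ.prod μ := by
        rw [integral_add hg hg_swap, integral_prod_swap g]
        ring

section SpectralKernel

variable {α : Type*}

def IsPosSpectralKernel (k : α → α → ℂ) : Prop :=
  ∃ (lam : ℕ → ℝ) (φ : ℕ → α → ℂ), (∀ n, 0 ≤ lam n) ∧
    ∀ x y, HasSum (fun n => (lam n : ℂ) * φ n x * (starRingEnd ℂ) (φ n y)) (k x y)

theorem re_ofReal_mul_mul_conj (r : ℝ) (z : ℂ) :
    ((r : ℂ) * z * (starRingEnd ℂ) z).re = r * ‖z‖ ^ 2 := by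
  rw [mul_assoc, mul_conj, ← ofReal_mul, ofReal_re, normSq_eq_norm_sq]

theorem norm_ofReal_mul_mul_conj {r : ℝ} (hr : 0 ≤ r) (z w : ℂ) :
    ‖(r : ℂ) * z * (starRingEnd ℂ) w‖ = √(r * ‖z‖ ^ 2) * √(r * ‖w‖ ^ 2) := by
  rw [Real.sqrt_mul hr, Real.sqrt_mul hr, Real.sqrt_sq (norm_nonneg _),
    Real.sqrt_sq (norm_nonneg _), mul_mul_mul_comm, Real.mul_self_sqrt hr, norm_mul, norm_mul,
    norm_real, Real.norm_of_nonneg hr, norm_conj, mul_assoc]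

theorem hasSum_re_diag_of_hasSum_spectral {k : α → α → ℂ} {lam : ℕ → ℝ} {φ : ℕ → α → ℂ}
    (hk : ∀ x y, HasSum (fun n => (lam n : ℂ) * φ n x * (starRingEnd ℂ) (φ n y)) (k x y))
    (x : α) : HasSum (fun n => lam n * ‖φ n x‖ ^ 2) (k x x).re := by
  simpa only [re_ofReal_mul_mul_conj] using hasSum_re (hk x x)

namespace IsPosSpectralKernel

variable {k : α → α → ℂ}

theorem re_diag_nonneg (hk : IsPosSpectralKernel k) (x : α) : 0 ≤ (k x x).re := by
  obtain ⟨lam, φ, hlam, hk⟩ := hk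
  exact (hasSum_re_diag_of_hasSum_spectral hk x).nonneg fun n =>
    mul_nonneg (hlam n) (sq_nonneg _)

theorem norm_le_sqrt_mul_sqrt (hk : IsPosSpectralKernel k) (x y : α) :
    ‖k x y‖ ≤ √(k x x).re * √(k y y).re := by
  obtain ⟨lam, φ, hlam, hk⟩ := hk
  refine (hk x y).norm_le_of_forall_sum_norm_le fun s => ?_
  have hnonneg : ∀ z n, 0 ≤ lam n * ‖φ n z‖ ^ 2 := fun z n =>
    mul_nonneg (hlam n) (sq_nonneg _)
  have hdiag := hasSum_re_diag_of_hasSum_spectral hk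
  calc ∑ n ∈ s, ‖(lam n : ℂ) * φ n x * (starRingEnd ℂ) (φ n y)‖
      = ∑ n ∈ s, √(lam n * ‖φ n x‖ ^ 2) * √(lam n * ‖φ n y‖ ^ 2) := by
        simp only [norm_ofReal_mul_mul_conj (hlam _)]
    _ ≤ √(∑ n ∈ s, lam n * ‖φ n x‖ ^ 2) * √(∑ n ∈ s, lam n * ‖φ n y‖ ^ 2) :=
        Real.sum_sqrt_mul_sqrt_le s (hnonneg x) (hnonneg y)
    _ ≤ √(k x x).re * √(k y y).re := by
        gcongr
        · exact sum_le_hasSum s (fun n _ => hnonneg x n) (hdiag x)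
        · exact sum_le_hasSum s (fun n _ => hnonneg y n) (hdiag y)

theorem abs_norm_add_sq_sub_norm_sq_le {σ δ : α → α → ℂ} (hσ : IsPosSpectralKernel σ)
    (hδ : IsPosSpectralKernel δ) (x y : α) :
    |‖σ x y + δ x y‖ ^ 2 - ‖σ x y‖ ^ 2|
      ≤ (σ x x + δ x x).re * (δ y y).re + (σ y y + δ y y).re * (δ x x).re := by
  simpa only [add_re] using _root_.abs_norm_add_sq_sub_norm_sq_le (hσ.re_diag_nonneg x)
    (hσ.re_diag_nonneg y) (hδ.re_diag_nonneg x) (hδ.re_diag_nonneg y)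
    (hσ.norm_le_sqrt_mul_sqrt x y) (hδ.norm_le_sqrt_mul_sqrt x y)

end IsPosSpectralKernel

end SpectralKernel

theorem IsPosTCKernel.isPosSpectralKernel {k : R3 → R3 → ℂ} (hk : IsPosTCKernel k) :
    IsPosSpectralKernel k :=
  let ⟨lam, φ, hlam, _, _, hsum, _⟩ := hk
  ⟨lam, φ, hlam, hsum⟩

theorem stmt1_general (σ δ : R3 → R3 → ℂ) (V : R3 → ℝ)
    (hσ : IsPosTCKernel σ) (hδ : IsPosTCKernel δ)
    (hVeven : ∀ x : R3, V (-x) = V x)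
    (hint2 : Integrable (fun p : R3 × R3 =>
      |V (p.1 - p.2)| * (σ p.1 p.1 + δ p.1 p.1).re * (δ p.2 p.2).re)) :
    |∫ p : R3 × R3, V (p.1 - p.2) *
        (‖σ p.1 p.2 + δ p.1 p.2‖ ^ 2 - ‖σ p.1 p.2‖ ^ 2)|
      ≤ 2 * ∫ p : R3 × R3,
          |V (p.1 - p.2)| * (σ p.1 p.1 + δ p.1 p.1).re * (δ p.2 p.2).re := by
  refine abs_integral_le_two_mul_integral_of_abs_le_add_swap hint2 fun ⟨x, y⟩ => ?_
  have hVswap : |V (y - x)| = |V (x - y)| := by rw [← neg_sub, hVeven]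
  calc |V (x - y) * (‖σ x y + δ x y‖ ^ 2 - ‖σ x y‖ ^ 2)|
      ≤ |V (x - y)| * ((σ x x + δ x x).re * (δ y y).re + (σ y y + δ y y).re * (δ x x).re) := by
        rw [abs_mul]
        gcongr
        exact hσ.isPosSpectralKernel.abs_norm_add_sq_sub_norm_sq_le hδ.isPosSpectralKernel x y
    _ = |V (x - y)| * (σ x x + δ x x).re * (δ y y).re
          + |V (y - x)| * (σ y y + δ y y).re * (δ x x).re := by
        rw [hVswap]
        ring

theorem stmt1 (σ δ : R3 → R3 → ℂ) (V : R3 → ℝ)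
    (hσ : IsPosTCKernel σ) (hδ : IsPosTCKernel δ)
    (hVmeas : Measurable V) (hVbdd : ∃ C : ℝ, ∀ x, |V x| ≤ C)
    (hVeven : ∀ x : R3, V (-x) = V x)
    (hint1 : Integrable (fun p : R3 × R3 => V (p.1 - p.2) *
      (‖σ p.1 p.2 + δ p.1 p.2‖ ^ 2 - ‖σ p.1 p.2‖ ^ 2)))
    (hint2 : Integrable (fun p : R3 × R3 =>
      |V (p.1 - p.2)| * (σ p.1 p.1 + δ p.1 p.1).re * (δ p.2 p.2).re)) :
    |∫ p : R3 × R3, V (p.1 - p.2) *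
        (‖σ p.1 p.2 + δ p.1 p.2‖ ^ 2 - ‖σ p.1 p.2‖ ^ 2)|
      ≤ 2 * ∫ p : R3 × R3,
          |V (p.1 - p.2)| * (σ p.1 p.1 + δ p.1 p.1).re * (δ p.2 p.2).re :=
  stmt1_general σ δ V hσ hδ hVeven hint2
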